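/- For every t > 0, every x = (x_1,x_2) in R^2, and all vectors Psi, Phi in C^2, setting s^2 = t^2 - |x|^2, one has the decomposition Psi^* gamma^0 Phi = (1/4) [ (Psi)_-^* gamma^0 (Phi)_- + (Psi)_-^* gamma^0 (Phi)_+ + (Psi)_+^* gamma^0 (Phi)_- + (s^2/t^2) Psi^* gamma^0 Phi ]. -/

import Mathlib

noncomputable section

open MeasureTheory Matrix Finset Real Filter

/-- Spacetime `ℝ^{1+2}`: coordinate `0` is time, coordinates `1, 2` are space. -/
abbrev Spt : Type := Fin 3 → ℝ
/-- Space `ℝ²`. -/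
abbrev Sp : Type := Fin 2 → ℝ
/-- Spinor space `ℂ²`. -/
abbrev Spinor : Type := Fin 2 → ℂ

/-- Minkowski metric `g = diag(-1, 1, 1)`. -/
def mink (μ ν : Fin 3) : ℝ := if μ = ν then (if μ = 0 then -1 else 1) else 0

/-- A choice of `2 × 2` complex Dirac matrices `γ^0, γ^1, γ^2` satisfying
`γ^μ γ^ν + γ^ν γ^μ = -2 g^{μν} I₂` and `(γ^μ)^* = -g_{μν} γ^ν`. -/
structure DiracMatrices where
  γ : Fin 3 → Matrix (Fin 2) (Fin 2) ℂ
  clifford : ∀ μ ν, γ μ * γ ν + γ ν * γ μ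
      = ((-2 * mink μ ν : ℝ) : ℂ) • (1 : Matrix (Fin 2) (Fin 2) ℂ)
  adjoint : ∀ μ, (γ μ)ᴴ = ((-(mink μ μ) : ℝ) : ℂ) • γ μ

/-- Partial derivative `∂_μ` of a function on spacetime. -/
def pt {V : Type*} [NormedAddCommGroup V] [NormedSpace ℝ V] (μ : Fin 3) (f : Spt → V) :
    Spt → V :=
  fun p => fderiv ℝ f p (Pi.single μ 1)

/-- `|x|²` for spatial points. -/
def xrsq (x : Sp) : ℝ := ∑ a : Fin 2, (x a) ^ 2

/-- `|x|²` of the spatial part of a spacetime point. -/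
def rsq (p : Spt) : ℝ := ∑ a : Fin 2, (p a.succ) ^ 2

/-- The interior of the light cone, `K = {(t,x) : t ≥ 2, |x| < t - 1}`. -/
def inK (p : Spt) : Prop := 2 ≤ p 0 ∧ Real.sqrt (rsq p) < p 0 - 1

/-- Parametrization of the hyperboloid `H_s` by space: `x ↦ (√(s² + |x|²), x)`. -/
def onH (s : ℝ) (x : Sp) : Spt := Fin.cons (Real.sqrt (s ^ 2 + xrsq x)) x

/-- Squared pointwise (Euclidean) norm of a spinor, `ψ^* ψ`. -/
def snormSq (v : Spinor) : ℝ := ∑ i : Fin 2, Complex.normSq (v i)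

/-- The sesquilinear expression `v^* γ^0 w`. -/
def bil (Γ : DiracMatrices) (v w : Spinor) : ℂ := star v ⬝ᵥ (Γ.γ 0).mulVec w

/-- The Dirac operator with mass: `i γ^μ ∂_μ ψ + m ψ`. -/
def dirac (Γ : DiracMatrices) (m : ℝ) (ψ : Spt → Spinor) : Spt → Spinor :=
  fun p => (∑ μ : Fin 3, Complex.I • (Γ.γ μ).mulVec (pt μ ψ p)) + (m : ℂ) • ψ p

/-- The Soler nonlinearity `(ψ^* γ^0 ψ) ψ`. -/
def soler (Γ : DiracMatrices) (ψ : Spt → Spinor) : Spt → Spinor :=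
  fun p => bil Γ (ψ p) (ψ p) • ψ p

/-- Lorentz boost `L_a = t ∂_a + x_a ∂_t`. -/
def Lb {V : Type*} [NormedAddCommGroup V] [NormedSpace ℝ V] (a : Fin 2) (f : Spt → V) :
    Spt → V :=
  fun p => p 0 • pt a.succ f p + p a.succ • pt 0 f p

/-- Modified Lorentz boost `hat L_a = L_a - (1/2) γ^0 γ^a`. -/
def hatLb (Γ : DiracMatrices) (a : Fin 2) (f : Spt → Spinor) : Spt → Spinor :=
  fun p => Lb a f p - (1 / 2 : ℂ) • (Γ.γ 0 * Γ.γ a.succ).mulVec (f p)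

/-- Semi-hyperboloidal derivative `underline ∂_a = (x_a/t) ∂_t + ∂_a`. -/
def und {V : Type*} [NormedAddCommGroup V] [NormedSpace ℝ V] (a : Fin 2) (f : Spt → V) :
    Spt → V :=
  fun p => (p a.succ / p 0) • pt 0 f p + pt a.succ f p

/-- Iterated translations `∂^I`. -/
def ptList {V : Type*} [NormedAddCommGroup V] [NormedSpace ℝ V] (I : List (Fin 3))
    (f : Spt → V) : Spt → V :=
  I.foldr (fun μ g => pt μ g) f

/-- Iterated Lorentz boosts `L^J`. -/
def LbList {V : Type*} [NormedAddCommGroup V] [NormedSpace ℝ V] (J : List (Fin 2))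
    (f : Spt → V) : Spt → V :=
  J.foldr (fun a g => Lb a g) f

/-- Iterated modified Lorentz boosts `hat L^J`. -/
def hatLbList (Γ : DiracMatrices) (J : List (Fin 2)) (f : Spt → Spinor) : Spt → Spinor :=
  J.foldr (fun a g => hatLb Γ a g) f

/-- `(v)_- = v - (x_a/t) γ^0 γ^a v` (with explicit `t`, `x`). -/
def tMinusX (Γ : DiracMatrices) (t : ℝ) (x : Sp) (v : Spinor) : Spinor :=
  v - ∑ a : Fin 2, (x a / t) • (Γ.γ 0 * Γ.γ a.succ).mulVec v

/-- `(v)_+ = v + (x_a/t) γ^0 γ^a v` (with explicit `t`, `x`). -/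
def tPlusX (Γ : DiracMatrices) (t : ℝ) (x : Sp) (v : Spinor) : Spinor :=
  v + ∑ a : Fin 2, (x a / t) • (Γ.γ 0 * Γ.γ a.succ).mulVec v

/-- `(v)_-` at a spacetime point. -/
def tMinus (Γ : DiracMatrices) (p : Spt) (v : Spinor) : Spinor :=
  tMinusX Γ (p 0) (fun a => p a.succ) v

/-- `[v]_- = v - (x_j/r) γ^0 γ^j v`. -/
def rMinus (Γ : DiracMatrices) (x : Sp) (v : Spinor) : Spinor :=
  v - ∑ a : Fin 2, (x a / Real.sqrt (xrsq x)) • (Γ.γ 0 * Γ.γ a.succ).mulVec v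

/-- `[v]_+ = v + (x_j/r) γ^0 γ^j v`. -/
def rPlus (Γ : DiracMatrices) (x : Sp) (v : Spinor) : Spinor :=
  v + ∑ a : Fin 2, (x a / Real.sqrt (xrsq x)) • (Γ.γ 0 * Γ.γ a.succ).mulVec v

/-- Hyperboloidal Dirac energy density `ψ^* ψ - (x_a/t) ψ^* γ^0 γ^a ψ`. -/
def EDdens (Γ : DiracMatrices) (ψ : Spt → Spinor) (p : Spt) : ℝ :=
  (star (ψ p) ⬝ᵥ ψ p
    - ∑ a : Fin 2, ((p a.succ / p 0 : ℝ) : ℂ)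
        * (star (ψ p) ⬝ᵥ (Γ.γ 0 * Γ.γ a.succ).mulVec (ψ p))).re

/-- The hyperboloidal Dirac energy `E^D(s, ψ)`. -/
def ED (Γ : DiracMatrices) (s : ℝ) (ψ : Spt → Spinor) : ℝ :=
  ∫ x : Sp, EDdens Γ ψ (onH s x)

/-- The energy `E^+(s, ψ) = ∫_{H_s} (ψ)_-^* (ψ)_-`. -/
def Eplus (Γ : DiracMatrices) (s : ℝ) (ψ : Spt → Spinor) : ℝ :=
  ∫ x : Sp, snormSq (tMinus Γ (onH s x) (ψ (onH s x)))

/-- The `L²_f(H_s)` norm of a spinor field. -/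
def L2f (s : ℝ) (f : Spt → Spinor) : ℝ :=
  Real.sqrt (∫ x : Sp, snormSq (f (onH s x)))

/-- Spatial partial derivative for functions on `ℝ²`. -/
def spd (a : Fin 2) (f : Sp → Spinor) : Sp → Spinor :=
  fun x => fderiv ℝ f x (Pi.single a 1)

/-- Squared Sobolev `H^k` norm: sum over spatial multi-indices `|α| ≤ k` of
`‖∂^α f‖_{L²(ℝ²)}²`. -/
def sobNormSq (k : ℕ) (f : Sp → Spinor) : ℝ :=
  ∑ i ∈ Finset.range (k + 1), ∑ j ∈ Finset.range (k + 1 - i),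
    ∫ x : Sp, snormSq ((spd 0)^[i] ((spd 1)^[j] f) x)

/-- The Sobolev `H^k` norm. -/
def sobNorm (k : ℕ) (f : Sp → Spinor) : ℝ := Real.sqrt (sobNormSq k f)

/-- Membership in `H^k(ℝ²; ℂ²)`: all derivatives of order `≤ k` are in `L²`. -/
def sobMem (k : ℕ) (f : Sp → Spinor) : Prop :=
  ∀ i j : ℕ, i + j ≤ k → MemLp ((spd 0)^[i] ((spd 1)^[j] f)) 2 (volume : Measure Sp)

/-- The time-`t` slice of a spacetime function. -/
def timeSlice (ψ : Spt → Spinor) (t : ℝ) : Sp → Spinor := fun x => ψ (Fin.cons t x)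

/-- The wave operator `□ = -∂_t ∂_t + Δ`. -/
def waveOp {V : Type*} [NormedAddCommGroup V] [NormedSpace ℝ V] (u : Spt → V) : Spt → V :=
  fun p => -(pt 0 (pt 0 u) p) + ∑ a : Fin 2, pt a.succ (pt a.succ u) p

/-- The operator `K = s ∂_s + 2 x^a underline∂_a`, written on the hyperboloid `H_s`
(where `s ∂_s = (s²/t) ∂_t`). -/
def Kop (s : ℝ) (u : Spt → Spinor) : Spt → Spinor :=
  fun p => (s ^ 2 / p 0) • pt 0 u p + (2 : ℝ) • ∑ a : Fin 2, p a.succ • und a u p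

/-- The conformal energy on `H_s`. -/
def Econ (s : ℝ) (u : Spt → Spinor) : ℝ :=
  ∫ x : Sp, ((∑ a : Fin 2, s ^ 2 * snormSq (und a u (onH s x)))
    + snormSq (Kop s u (onH s x) + u (onH s x)))

/-!
Put `A = (x_a/t) γ^0 γ^a`, so that `(v)_∓ = (1 ∓ A) v`. The Clifford relations make `A` Hermitian,
anticommuting with `γ^0`, and `A² = |x|²/t²`. Hence the three mixed terms add up to
`Ψ^* (3 γ^0 - A γ^0 A) Φ = (3 + |x|²/t²) Ψ^* γ^0 Φ`, and `s²/t² = 1 - |x|²/t²` supplies the rest.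
-/

theorem anticomm_sandwich_sum {R : Type*} [Ring R] {G A : R} (h : G * A = -(A * G)) :
    (1 - A) * G * (1 - A) + (1 - A) * G * (1 + A) + (1 + A) * G * (1 - A) + (1 - A * A) * G
      = 4 • G := by
  calc _ = 4 • G - (A * G + G * A) - A * (G * A) - A * A * G := by noncomm_ring
    _ = 4 • G := by rw [h]; noncomm_ring

theorem Matrix.star_mulVec_dotProduct_mulVec {n R : Type*} [Fintype n] [CommRing R] [StarRing R]
    (M G N : Matrix n n R) (v w : n → R) :
    star (M *ᵥ v) ⬝ᵥ G *ᵥ (N *ᵥ w) = star v ⬝ᵥ (Mᴴ * G * N) *ᵥ w := by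
  rw [star_mulVec, ← dotProduct_mulVec, mulVec_mulVec, mulVec_mulVec, mul_assoc]

theorem Matrix.dotProduct_anticomm_decomposition {n R : Type*} [Fintype n] [DecidableEq n]
    [CommRing R] [StarRing R] {G A : Matrix n n R} (hA : A.IsHermitian)
    (hGA : G * A = -(A * G)) {c : R} (hc : A * A = c • 1) (v w : n → R) :
    star ((1 - A) *ᵥ v) ⬝ᵥ G *ᵥ ((1 - A) *ᵥ w) + star ((1 - A) *ᵥ v) ⬝ᵥ G *ᵥ ((1 + A) *ᵥ w)
        + star ((1 + A) *ᵥ v) ⬝ᵥ G *ᵥ ((1 - A) *ᵥ w) + (1 - c) * (star v ⬝ᵥ G *ᵥ w)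
      = 4 * (star v ⬝ᵥ G *ᵥ w) := by
  have hsq : star v ⬝ᵥ ((1 - A * A) * G) *ᵥ w = (1 - c) * (star v ⬝ᵥ G *ᵥ w) := by
    rw [hc, sub_mul, one_mul, smul_mul_assoc, one_mul, sub_mulVec, dotProduct_sub, smul_mulVec,
      dotProduct_smul, smul_eq_mul, sub_mul, one_mul]
  simp only [star_mulVec_dotProduct_mulVec, conjTranspose_sub, conjTranspose_add,
    conjTranspose_one, hA.eq, ← hsq, ← dotProduct_add, ← add_mulVec, anticomm_sandwich_sum hGA]
  rw [smul_mulVec, dotProduct_smul, nsmul_eq_mul, Nat.cast_ofNat]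

theorem xrsq_div (x : Sp) (t : ℝ) : xrsq (fun a => x a / t) = xrsq x / t ^ 2 := by
  simp only [xrsq, div_pow, Finset.sum_div]

namespace DiracMatrices

variable (Γ : DiracMatrices)

theorem γ_mul_self (μ : Fin 3) : Γ.γ μ * Γ.γ μ = ((-mink μ μ : ℝ) : ℂ) • 1 := by
  have h := Γ.clifford μ μ
  rw [← two_smul ℂ, show ((-2 * mink μ μ : ℝ) : ℂ) = 2 * ((-mink μ μ : ℝ) : ℂ) by push_cast; ring,
    mul_smul] at h
  exact smul_right_injective _ two_ne_zero h

theorem γ_zero_mul_self : Γ.γ 0 * Γ.γ 0 = 1 := by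
  simp [γ_mul_self, mink]

theorem γ_succ_mul_self (a : Fin 2) : Γ.γ a.succ * Γ.γ a.succ = -1 := by
  simp [γ_mul_self, mink]

theorem γ_anticomm {μ ν : Fin 3} (h : μ ≠ ν) : Γ.γ μ * Γ.γ ν = -(Γ.γ ν * Γ.γ μ) :=
  eq_neg_of_add_eq_zero_left (by simpa [mink, h] using Γ.clifford μ ν)

theorem conjTranspose_γ_zero : (Γ.γ 0)ᴴ = Γ.γ 0 := by
  simpa [mink] using Γ.adjoint 0

theorem conjTranspose_γ_succ (a : Fin 2) : (Γ.γ a.succ)ᴴ = -Γ.γ a.succ := by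
  simpa [mink] using Γ.adjoint a.succ

def slash (β : Sp) : Matrix (Fin 2) (Fin 2) ℂ := ∑ a, β a • Γ.γ a.succ

variable (β : Sp)

theorem conjTranspose_slash : (Γ.slash β)ᴴ = -Γ.slash β := by
  simp only [slash, conjTranspose_sum, conjTranspose_smul, star_trivial, conjTranspose_γ_succ,
    smul_neg, Finset.sum_neg_distrib]

theorem slash_mul_γ_zero : Γ.slash β * Γ.γ 0 = -(Γ.γ 0 * Γ.slash β) := by
  simp only [slash, Finset.mul_sum, Finset.sum_mul, mul_smul_comm, smul_mul_assoc, smul_neg,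
    fun a => Γ.γ_anticomm (Fin.succ_ne_zero a), Finset.sum_neg_distrib]

theorem slash_mul_self : Γ.slash β * Γ.slash β = -((xrsq β : ℂ) • 1) := by
  simp only [slash, xrsq, Fin.sum_univ_two, add_mul, mul_add, smul_mul_smul, γ_succ_mul_self,
    Γ.γ_anticomm (show (Fin.succ 1 : Fin 3) ≠ Fin.succ 0 by decide)]
  rw [Complex.coe_smul]
  module

-- `β_a α^a`, with the Dirac alpha matrices `α^a = γ^0 γ^a`
def alphaDot : Matrix (Fin 2) (Fin 2) ℂ := Γ.γ 0 * Γ.slash β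

theorem isHermitian_alphaDot : (Γ.alphaDot β).IsHermitian := by
  rw [IsHermitian, alphaDot, conjTranspose_mul, conjTranspose_γ_zero, conjTranspose_slash, neg_mul,
    slash_mul_γ_zero, neg_neg]

theorem γ_zero_mul_alphaDot : Γ.γ 0 * Γ.alphaDot β = -(Γ.alphaDot β * Γ.γ 0) := by
  rw [alphaDot, mul_assoc (Γ.γ 0) _ (Γ.γ 0), slash_mul_γ_zero, mul_neg, neg_neg]

theorem alphaDot_mul_self : Γ.alphaDot β * Γ.alphaDot β = ((xrsq β : ℝ) : ℂ) • 1 := by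
  rw [alphaDot, mul_assoc, ← mul_assoc (Γ.slash β), slash_mul_γ_zero, neg_mul, mul_neg,
    ← mul_assoc, ← mul_assoc, γ_zero_mul_self, one_mul, slash_mul_self, neg_neg]

theorem tMinusX_eq_mulVec (t : ℝ) (x : Sp) (v : Spinor) :
    tMinusX Γ t x v = (1 - Γ.alphaDot (fun a => x a / t)) *ᵥ v := by
  simp only [tMinusX, alphaDot, slash, Finset.mul_sum, mul_smul_comm, sub_mulVec, one_mulVec,
    sum_mulVec, smul_mulVec]

theorem tPlusX_eq_mulVec (t : ℝ) (x : Sp) (v : Spinor) :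
    tPlusX Γ t x v = (1 + Γ.alphaDot (fun a => x a / t)) *ᵥ v := by
  simp only [tPlusX, alphaDot, slash, Finset.mul_sum, mul_smul_comm, add_mulVec, one_mulVec,
    sum_mulVec, smul_mulVec]

end DiracMatrices

/-- Hidden structure of the sesquilinear form `Ψ^* γ^0 Φ`:
decomposition into good components, where `s² = t² - |x|²`. -/
theorem dirac_bilinear_hidden_structure
    (Γ : DiracMatrices) (t : ℝ) (ht : 0 < t) (x : Sp) (Ψ Φ : Spinor) :
    star Ψ ⬝ᵥ (Γ.γ 0).mulVec Φ
      = (1 / 4 : ℂ) *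
          (star (tMinusX Γ t x Ψ) ⬝ᵥ (Γ.γ 0).mulVec (tMinusX Γ t x Φ)
            + star (tMinusX Γ t x Ψ) ⬝ᵥ (Γ.γ 0).mulVec (tPlusX Γ t x Φ)
            + star (tPlusX Γ t x Ψ) ⬝ᵥ (Γ.γ 0).mulVec (tMinusX Γ t x Φ)
            + (((t ^ 2 - xrsq x) / t ^ 2 : ℝ) : ℂ) * (star Ψ ⬝ᵥ (Γ.γ 0).mulVec Φ)) := by
  have h := dotProduct_anticomm_decomposition (Γ.isHermitian_alphaDot fun a => x a / t)
    (Γ.γ_zero_mul_alphaDot _) (Γ.alphaDot_mul_self _) Ψ Φ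
  simp only [← Γ.tMinusX_eq_mulVec, ← Γ.tPlusX_eq_mulVec, xrsq_div] at h
  have hs : (((t ^ 2 - xrsq x) / t ^ 2 : ℝ) : ℂ) = 1 - ((xrsq x / t ^ 2 : ℝ) : ℂ) := by
    have : (t : ℂ) ≠ 0 := by exact_mod_cast ht.ne'
    push_cast
    field_simp
  rw [hs]
  linear_combination (-1 / 4 : ℂ) * h
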